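/- arXiv:2503.05970 — 4 statements merged into one kernel-verified Lean document; each statement's English description precedes it below -/
import Mathlib

section
/- Fix u ∈ (0,1) and N agents. For each agent i = 1,…,N let K_i ≥ 1 be an integer and λ_i > 0. On a probability space, let e_{i,0} be square-integrable random variables that are independent across agents, and let {ξ^{(n)}_{i,t} : 1 ≤ n ≤ K_i, t ≥ 1} be random variables, mutually independent and independent of the initial errors, each with mean 0 and variance at most λ_i². Define recursively e_{i,t} = u·e_{i,t−1} + (1−u)·(1/K_i)·Σ_{n=1}^{K_i} ξ^{(n)}_{i,t}. Then for every t ≥ 0, Var(Σ_{i=1}^N e_{i,t}) ≤ Σ_{i=1}^N ( u^{2t}·Var(e_{i,0}) + ((1−u)/(1+u))·λ_i²/K_i ). -/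
open MeasureTheory ProbabilityTheory Finset Function

/-!
Unrolling the recursion writes `∑ i, e i t` as a linear combination of the initial errors and the
noise terms, with coefficients `u ^ t` and `(1 - u) u ^ s / K i`, where the noise term `ξ i n (t - s)`
is reached after `s` more steps. These base variables are independent, so the variance is the sum
of the squared coefficients times their variances, and the noise part of agent `i` is at most
`K i · (1 - u)² / (K i)² · λᵢ² · ∑ₛ u ^ (2s) ≤ (1 - u) / (1 + u) · λᵢ² / K i`.
-/

theorem eq_pow_mul_add_sum_of_succ_eq {R : Type*} [CommSemiring R] {x g : ℕ → R} (a : R)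
    (h : ∀ t, x (t + 1) = a * x t + g (t + 1)) (t : ℕ) :
    x t = a ^ t * x 0 + ∑ s ∈ range t, a ^ s * g (t - s) := by
  induction t with
  | zero => simp
  | succ t ih =>
    rw [h, ih, sum_range_succ', mul_add, mul_sum]
    simp only [Nat.succ_sub_succ, pow_zero, one_mul, Nat.sub_zero, pow_succ']
    ring_nf

theorem ensemble_error_eq_sum {K : ℕ} {x : ℕ → ℝ} {y : Fin K → ℕ → ℝ} (u : ℝ)
    (h : ∀ t, x (t + 1) = u * x t + (1 - u) * (1 / (K : ℝ)) * ∑ n, y n (t + 1)) (t : ℕ) :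
    x t = u ^ t * x 0 + ∑ n, ∑ s : Fin t, (1 - u) * u ^ (s : ℕ) / K * y n (t - s) := by
  rw [eq_pow_mul_add_sum_of_succ_eq (g := fun t => (1 - u) * (1 / (K : ℝ)) * ∑ n, y n t) u h t,
    sum_comm, ← Fin.sum_univ_eq_sum_range]
  simp only [mul_sum]
  congr 1; refine sum_congr rfl fun s _ => sum_congr rfl fun n _ => ?_; ring

theorem variance_sum_mul_of_iIndepFun {Ω ι κ : Type*} [MeasurableSpace Ω] {μ : Measure Ω}
    [Fintype ι] {F : κ → Ω → ℝ} (hF : iIndepFun F μ) (hL2 : ∀ k, MemLp (F k) 2 μ)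
    {f : ι → κ} (hf : Injective f) (c : ι → ℝ) :
    variance (fun ω => ∑ j, c j * F (f j) ω) μ = ∑ j, c j ^ 2 * variance (F (f j)) μ := by
  have hindep : iIndepFun (fun j => (fun x => c j * x) ∘ F (f j)) μ :=
    (hF.precomp hf).comp _ fun j => measurable_const_mul (c j)
  have := IndepFun.variance_sum (X := fun j ω => c j * F (f j) ω) (s := univ)
    (fun j _ => (hL2 (f j)).const_mul (c j)) (fun j _ j' _ hjj' => hindep.indepFun hjj')
  simpa only [sum_fn, variance_const_mul] using this

theorem injective_fin_sub (t : ℕ) : Injective fun s : Fin t => t - (s : ℕ) :=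
  fun a b h => Fin.ext (by have := a.isLt; have := b.isLt; simp only at h; omega)

theorem sum_sq_ensemble_weight_le {u : ℝ} (hu₀ : -1 < u) (hu₁ : u < 1) (K t : ℕ) :
    ∑ _n : Fin K, ∑ s : Fin t, ((1 - u) * u ^ (s : ℕ) / K) ^ 2 ≤ (1 - u) / (1 + u) / K := by
  have hgeom : ∑ s ∈ range t, (u ^ 2) ^ s ≤ 1 / (1 - u ^ 2) := by
    simpa using geom_sum_Ico_le_of_lt_one (m := 0) (n := t) (sq_nonneg u) (by nlinarith)
  have hK : (K : ℝ) * (1 / K) ^ 2 = 1 / K := by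
    rcases eq_or_ne (K : ℝ) 0 with hK | hK
    · simp [hK]
    · field_simp
  calc ∑ _n : Fin K, ∑ s : Fin t, ((1 - u) * u ^ (s : ℕ) / K) ^ 2
      = K * (1 / K) ^ 2 * (1 - u) ^ 2 * ∑ s ∈ range t, (u ^ 2) ^ s := by
        simp only [sum_const, card_univ, Fintype.card_fin, nsmul_eq_mul, mul_sum,
          Fin.sum_univ_eq_sum_range (fun s => ((1 - u) * u ^ s / K) ^ 2)]
        congr 1; ext s; ring
    _ ≤ K * (1 / K) ^ 2 * (1 - u) ^ 2 * (1 / (1 - u ^ 2)) := by gcongr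
    _ = (1 - u) / (1 + u) / K := by
        rw [hK, show 1 - u ^ 2 = (1 - u) * (1 + u) by ring]
        field_simp

theorem mmemq_variance_bound_general
    {Ω : Type*} [MeasurableSpace Ω] (μ : Measure Ω) [IsProbabilityMeasure μ]
    (N : ℕ) (u : ℝ) (hu : u ∈ Set.Ioo (0 : ℝ) 1)
    (K : Fin N → ℕ)
    (lam : Fin N → ℝ)
    (e : Fin N → ℕ → Ω → ℝ)
    (ξ : (i : Fin N) → Fin (K i) → ℕ → Ω → ℝ)
    (he0 : ∀ i, MemLp (e i 0) 2 μ)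
    (hξint : ∀ i n t, MemLp (ξ i n t) 2 μ)
    (hindep : iIndepFun
      (Sum.elim (fun i : Fin N => e i 0)
        (fun p : Σ i : Fin N, Fin (K i) × ℕ => ξ p.1 p.2.1 p.2.2)) μ)
    (hvar : ∀ i n t, variance (ξ i n t) μ ≤ (lam i) ^ 2)
    (hrec : ∀ i t ω, e i (t + 1) ω
      = u * e i t ω + (1 - u) * (1 / (K i : ℝ)) * ∑ n, ξ i n (t + 1) ω) :
    ∀ t : ℕ, variance (fun ω => ∑ i, e i t ω) μ
      ≤ ∑ i, (u ^ (2 * t) * variance (e i 0) μ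
          + ((1 - u) / (1 + u)) * (lam i) ^ 2 / (K i : ℝ)) := by
  intro t
  have hunroll := fun i ω => 
    ensemble_error_eq_sum (x := (e i · ω)) (y := fun n s => ξ i n s ω) u (hrec i · ω) t
  let emb : Fin N ⊕ (Σ i : Fin N, Fin (K i) × Fin t) → Fin N ⊕ (Σ i : Fin N, Fin (K i) × ℕ) :=
    Sum.map id (Sigma.map id fun _ => Prod.map id fun s => t - s)
  have hemb : Injective emb :=
    injective_id.sumMap (injective_id.sigma_map fun _ => injective_id.prodMap (injective_fin_sub t))
  let c : Fin N ⊕ (Σ i : Fin N, Fin (K i) × Fin t) → ℝ :=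
    Sum.elim (fun _ => u ^ t) fun p => (1 - u) * u ^ (p.2.2 : ℕ) / K p.1
  have hsum : (fun ω => ∑ i, e i t ω) = fun ω => ∑ j, c j * Sum.elim (fun i : Fin N => e i 0)
        (fun p : Σ i : Fin N, Fin (K i) × ℕ => ξ p.1 p.2.1 p.2.2) (emb j) ω := by
    ext ω
    simp only [hunroll, Fintype.sum_sum_type, Fintype.sum_sigma, Fintype.sum_prod_type, sum_add_distrib]
    rfl
  rw [hsum, variance_sum_mul_of_iIndepFun hindep (Sum.rec he0 fun p => hξint _ _ _) hemb c]
  rw [Fintype.sum_sum_type, Fintype.sum_sigma, sum_add_distrib]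
  refine add_le_add (le_of_eq (sum_congr rfl fun i _ => ?_)) (sum_le_sum fun i _ => ?_)
  · simp only [c, emb, Sum.elim_inl, Sum.map_inl, id, ← pow_mul, mul_comm t 2]
  · calc _ ≤ ∑ n : Fin (K i), ∑ s : Fin t, ((1 - u) * u ^ (s : ℕ) / K i) ^ 2 * lam i ^ 2 := by
          rw [Fintype.sum_prod_type]
          exact sum_le_sum fun n _ => sum_le_sum fun s _ =>
            mul_le_mul_of_nonneg_left (hvar i n _) (sq_nonneg _)
      _ ≤ (1 - u) / (1 + u) / K i * lam i ^ 2 := by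
          simp only [← sum_mul]; gcongr; exact sum_sq_ensemble_weight_le (by linarith [hu.1]) hu.2 (K i) t
      _ = _ := by ring

/-- Proposition 1 instance: variance bound for the joint ensemble
Q-function error in uncoordinated states. -/
theorem mmemq_variance_bound
    {Ω : Type*} [MeasurableSpace Ω] (μ : Measure Ω) [IsProbabilityMeasure μ]
    (N : ℕ) (u : ℝ) (hu : u ∈ Set.Ioo (0 : ℝ) 1)
    (K : Fin N → ℕ) (hK : ∀ i, 1 ≤ K i)
    (lam : Fin N → ℝ) (hlam : ∀ i, 0 < lam i)
    (e : Fin N → ℕ → Ω → ℝ)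
    (ξ : (i : Fin N) → Fin (K i) → ℕ → Ω → ℝ)
    (he0 : ∀ i, MemLp (e i 0) 2 μ)
    (hξint : ∀ i n t, MemLp (ξ i n t) 2 μ)
    (hindep : iIndepFun
      (Sum.elim (fun i : Fin N => e i 0)
        (fun p : Σ i : Fin N, Fin (K i) × ℕ => ξ p.1 p.2.1 p.2.2)) μ)
    (hmean : ∀ i n t, ∫ ω, ξ i n t ω ∂μ = 0)
    (hvar : ∀ i n t, variance (ξ i n t) μ ≤ (lam i) ^ 2)
    (hrec : ∀ i t ω, e i (t + 1) ω
      = u * e i t ω + (1 - u) * (1 / (K i : ℝ)) * ∑ n, ξ i n (t + 1) ω) :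
    ∀ t : ℕ, variance (fun ω => ∑ i, e i t ω) μ
      ≤ ∑ i, (u ^ (2 * t) * variance (e i 0) μ
          + ((1 - u) / (1 + u)) * (lam i) ^ 2 / (K i : ℝ)) :=
  mmemq_variance_bound_general μ N u hu K lam e ξ he0 hξint hindep hvar hrec
end

section
/- Let u_t ∈ [0,1) (t ≥ 1) satisfy u_t → 1 and Σ_{t≥1} (1−u_t) = ∞. For each agent i = 1,…,N let e_{i,0} be a real constant and let η_{i,t} (t ≥ 1) be random variables, mutually independent across all i and t, each with mean 0 and variance at most λ_i². Define e_{i,t} = u_t·e_{i,t−1} + (1−u_t)·η_{i,t}. Then E[(Σ_{i=1}^N e_{i,t})²] → 0 as t → ∞, i.e., Σ_{i=1}^N e_{i,t} converges to 0 in mean square. -/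
/-!
Summing over agents, `S t = ∑ i, e i t` obeys the same recursion
`S t = u t * S (t - 1) + (1 - u t) * ξ t` with `ξ t = ∑ i, η i t`, which unrolls to
`S t = (∏_{r ≤ t} u r) * S 0 + ∑_{s ≤ t} w s t * ξ s`, `w s t = (1 - u s) * ∏_{s < r ≤ t} u r`.
Independence and zero means make the second moment equal to
`(∏_{r ≤ t} u r * S 0) ^ 2 + ∑_{i, s} w s t ^ 2 * Var (η i s)`, which is at most
`(∏_{r ≤ t} u r * S 0) ^ 2 + (∑ i, λ i ^ 2) * ∑_s w s t ^ 2`.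
The product is at most `exp (-∑ (1 - u r)) → 0`, and `∑_s w s t ^ 2 ≤ ∑_s w s t * (1 - u s) → 0`
by a Toeplitz argument: the weights are nonnegative, sum to at most `1`, and vanish as `t → ∞`
for each fixed `s`, while `1 - u s → 0`.
-/

open MeasureTheory ProbabilityTheory Filter Finset

namespace LinearRecursion

variable (u : ℕ → ℝ)

noncomputable def tailProd (m t : ℕ) : ℝ := ∏ r ∈ Ioc m t, u r

/-- The weight with which the input at time `s` enters the state at time `t` of the recursion
`x t = u t * x (t - 1) + (1 - u t) * y t`. -/
noncomputable def stepWeight (s t : ℕ) : ℝ := (1 - u s) * tailProd u s t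

@[simp]
lemma tailProd_self (t : ℕ) : tailProd u t t = 1 := by
  simp [tailProd]

lemma tailProd_succ {m t : ℕ} (hmt : m ≤ t) :
    tailProd u m (t + 1) = tailProd u m t * u (t + 1) :=
  prod_Ioc_succ_top hmt u

lemma tailProd_mul_tailProd {s m t : ℕ} (hsm : s ≤ m) (hmt : m ≤ t) :
    tailProd u s m * tailProd u m t = tailProd u s t :=
  prod_Ioc_consecutive u hsm hmt

lemma stepWeight_mul_tailProd {s m t : ℕ} (hsm : s ≤ m) (hmt : m ≤ t) :
    stepWeight u s m * tailProd u m t = stepWeight u s t := by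
  rw [stepWeight, stepWeight, mul_assoc, tailProd_mul_tailProd u hsm hmt]

theorem eq_tailProd_mul_add_sum_stepWeight {x y : ℕ → ℝ}
    (hrec : ∀ t, x (t + 1) = u (t + 1) * x t + (1 - u (t + 1)) * y (t + 1))
    {a t : ℕ} (hat : a ≤ t) :
    x t = tailProd u a t * x a + ∑ s ∈ Ioc a t, stepWeight u s t * y s := by
  induction t, hat using Nat.le_induction with
  | base => simp
  | succ t hat ih =>
    have hweight : ∀ s ∈ Ioc a t,
        stepWeight u s (t + 1) * y s = u (t + 1) * (stepWeight u s t * y s) := fun s hs => by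
      rw [stepWeight, stepWeight, tailProd_succ u (mem_Ioc.1 hs).2]
      ring
    rw [hrec, ih, sum_Ioc_succ_top hat, sum_congr rfl hweight, ← mul_sum, tailProd_succ u hat,
      stepWeight, tailProd_self]
    ring

lemma sum_stepWeight {a t : ℕ} (hat : a ≤ t) :
    ∑ s ∈ Ioc a t, stepWeight u s t = 1 - tailProd u a t := by
  have := eq_tailProd_mul_add_sum_stepWeight u (x := 1) (y := 1) (fun _ => by simp) hat
  simp only [Pi.one_apply, mul_one] at this
  linarith

lemma sum_stepWeight_mul_eq {m t : ℕ} (hmt : m ≤ t) (y : ℕ → ℝ) :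
    ∑ s ∈ Ioc 0 t, stepWeight u s t * y s =
      tailProd u m t * ∑ s ∈ Ioc 0 m, stepWeight u s m * y s +
        ∑ s ∈ Ioc m t, stepWeight u s t * y s := by
  rw [← sum_Ioc_consecutive _ (Nat.zero_le m) hmt, mul_sum]
  congr 1
  refine sum_congr rfl fun s hs => ?_
  rw [← stepWeight_mul_tailProd u (mem_Ioc.1 hs).2 hmt]
  ring

lemma tailProd_nonneg (hu : ∀ t, 1 ≤ t → 0 ≤ u t) (m t : ℕ) : 0 ≤ tailProd u m t :=
  prod_nonneg fun r hr => hu r (Nat.one_le_of_lt (mem_Ioc.1 hr).1)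

lemma tailProd_le_exp_neg_sum (hu : ∀ t, 1 ≤ t → 0 ≤ u t) (m t : ℕ) :
    tailProd u m t ≤ Real.exp (-∑ r ∈ Ioc m t, (1 - u r)) := by
  rw [← sum_neg_distrib, Real.exp_sum]
  refine prod_le_prod (fun r hr => hu r (Nat.one_le_of_lt (mem_Ioc.1 hr).1)) fun r _ => ?_
  linarith [Real.add_one_le_exp (-(1 - u r))]

theorem tendsto_tailProd_zero (hu : ∀ t, 1 ≤ t → 0 ≤ u t)
    (hdiv : Tendsto (fun T => ∑ t ∈ Icc 1 T, (1 - u t)) atTop atTop) (m : ℕ) :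
    Tendsto (tailProd u m) atTop (nhds 0) := by
  have htail : Tendsto (fun t => ∑ r ∈ Ioc m t, (1 - u r)) atTop atTop := by
    refine (tendsto_atTop_add_const_right _ (-∑ r ∈ Icc 1 m, (1 - u r)) hdiv).congr' ?_
    filter_upwards [eventually_ge_atTop m] with t hmt
    have hIcc : ∀ T, Icc 1 T = Ioc 0 T := Icc_add_one_left_eq_Ioc 0
    rw [hIcc, hIcc, ← sum_Ioc_consecutive _ (Nat.zero_le m) hmt]
    ring
  exact squeeze_zero (tailProd_nonneg u hu m) (tailProd_le_exp_neg_sum u hu m)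
    (Real.tendsto_exp_atBot.comp (tendsto_neg_atTop_atBot.comp htail))

variable {u}

lemma tailProd_le_one (hu : ∀ t, 1 ≤ t → u t ∈ Set.Icc 0 1) (m t : ℕ) : tailProd u m t ≤ 1 :=
  prod_le_one (fun r hr => (hu r (Nat.one_le_of_lt (mem_Ioc.1 hr).1)).1)
    fun r hr => (hu r (Nat.one_le_of_lt (mem_Ioc.1 hr).1)).2

lemma stepWeight_nonneg (hu : ∀ t, 1 ≤ t → u t ∈ Set.Icc 0 1) {s : ℕ} (hs : 1 ≤ s) (t : ℕ) :
    0 ≤ stepWeight u s t :=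
  mul_nonneg (sub_nonneg.2 (hu s hs).2) (tailProd_nonneg u (fun r hr => (hu r hr).1) s t)

lemma stepWeight_le_one_sub (hu : ∀ t, 1 ≤ t → u t ∈ Set.Icc 0 1) {s : ℕ} (hs : 1 ≤ s) (t : ℕ) :
    stepWeight u s t ≤ 1 - u s :=
  mul_le_of_le_one_right (sub_nonneg.2 (hu s hs).2) (tailProd_le_one hu s t)

theorem tendsto_sum_stepWeight_mul_zero (hu : ∀ t, 1 ≤ t → u t ∈ Set.Icc 0 1)
    (hdiv : Tendsto (fun T => ∑ t ∈ Icc 1 T, (1 - u t)) atTop atTop) {y : ℕ → ℝ}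
    (hy : Tendsto y atTop (nhds 0)) :
    Tendsto (fun t => ∑ s ∈ Ioc 0 t, stepWeight u s t * y s) atTop (nhds 0) := by
  refine Metric.tendsto_nhds.2 fun ε hε => ?_
  obtain ⟨m, hm⟩ := eventually_atTop.1 (Metric.tendsto_nhds.1 hy (ε / 2) (half_pos hε))
  have hhead : Tendsto (fun t => tailProd u m t * ∑ s ∈ Ioc 0 m, stepWeight u s m * y s)
      atTop (nhds 0) := by
    simpa using (tendsto_tailProd_zero u (fun r hr => (hu r hr).1) hdiv m).mul_const _
  filter_upwards [Metric.tendsto_nhds.1 hhead (ε / 2) (half_pos hε), eventually_ge_atTop m]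
    with t hhead_lt hmt
  have htail : |∑ s ∈ Ioc m t, stepWeight u s t * y s| ≤ ε / 2 :=
    calc |∑ s ∈ Ioc m t, stepWeight u s t * y s|
        ≤ ∑ s ∈ Ioc m t, stepWeight u s t * (ε / 2) := by
          refine (abs_sum_le_sum_abs _ _).trans (sum_le_sum fun s hs => ?_)
          have hs1 : 1 ≤ s := Nat.one_le_of_lt (mem_Ioc.1 hs).1
          rw [abs_mul, abs_of_nonneg (stepWeight_nonneg hu hs1 t)]
          have := hm s (mem_Ioc.1 hs).1.le
          rw [Real.dist_eq, sub_zero] at this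
          exact mul_le_mul_of_nonneg_left this.le (stepWeight_nonneg hu hs1 t)
      _ = (1 - tailProd u m t) * (ε / 2) := by rw [← sum_mul, sum_stepWeight u hmt]
      _ ≤ ε / 2 := mul_le_of_le_one_left (half_pos hε).le
          (sub_le_self _ (tailProd_nonneg u (fun r hr => (hu r hr).1) m t))
  rw [Real.dist_eq, sub_zero] at hhead_lt ⊢
  rw [sum_stepWeight_mul_eq u hmt]
  exact (abs_add_le _ _).trans_lt (by linarith)

theorem tendsto_sum_sq_stepWeight_zero (hu : ∀ t, 1 ≤ t → u t ∈ Set.Icc 0 1)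
    (hu1 : Tendsto u atTop (nhds 1))
    (hdiv : Tendsto (fun T => ∑ t ∈ Icc 1 T, (1 - u t)) atTop atTop) :
    Tendsto (fun t => ∑ s ∈ Ioc 0 t, stepWeight u s t ^ 2) atTop (nhds 0) := by
  have hgap : Tendsto (fun s => 1 - u s) atTop (nhds 0) := by
    simpa using (tendsto_const_nhds (x := (1 : ℝ))).sub hu1
  refine squeeze_zero (fun t => sum_nonneg fun s _ => sq_nonneg _) (fun t => ?_)
    (tendsto_sum_stepWeight_mul_zero hu hdiv hgap)
  refine sum_le_sum fun s hs => ?_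
  have hs1 : 1 ≤ s := Nat.one_le_of_lt (mem_Ioc.1 hs).1
  rw [sq]
  exact mul_le_mul_of_nonneg_left (stepWeight_le_one_sub hu hs1 t) (stepWeight_nonneg hu hs1 t)

end LinearRecursion

namespace ProbabilityTheory

variable {Ω ι : Type*} [MeasurableSpace Ω] {μ : Measure Ω} {X : ι → Ω → ℝ}

lemma iIndepFun.variance_sum_const_mul (hX : ∀ i, MemLp (X i) 2 μ) (hind : iIndepFun X μ)
    (w : ι → ℝ) (s : Finset ι) :
    Var[fun ω => ∑ i ∈ s, w i * X i ω; μ] = ∑ i ∈ s, w i ^ 2 * Var[X i; μ] := by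
  have hsum : (fun ω => ∑ i ∈ s, w i * X i ω) = ∑ i ∈ s, fun ω => w i * X i ω := by
    ext ω; simp
  rw [hsum, IndepFun.variance_sum (fun i _ => (hX i).const_mul (w i))
    fun i _ j _ hij => (hind.indepFun hij).comp (measurable_const_mul _) (measurable_const_mul _)]
  exact sum_congr rfl fun i _ => variance_const_mul _ _ _

lemma integral_sq_const_add_sum_mul [IsProbabilityMeasure μ] (hX : ∀ i, MemLp (X i) 2 μ)
    (hind : iIndepFun X μ) (hmean : ∀ i, ∫ ω, X i ω ∂μ = 0) (a : ℝ) (w : ι → ℝ)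
    (s : Finset ι) :
    ∫ ω, (a + ∑ i ∈ s, w i * X i ω) ^ 2 ∂μ = a ^ 2 + ∑ i ∈ s, w i ^ 2 * Var[X i; μ] := by
  have hZ : MemLp (fun ω => ∑ i ∈ s, w i * X i ω) 2 μ :=
    memLp_finsetSum s fun i _ => (hX i).const_mul (w i)
  have hmeanZ : ∫ ω, ∑ i ∈ s, w i * X i ω ∂μ = 0 := by
    rw [integral_finsetSum s fun i _ => ((hX i).integrable one_le_two).const_mul (w i)]
    simp [integral_const_mul, hmean]
  have hmeanS : ∫ ω, (a + ∑ i ∈ s, w i * X i ω) ∂μ = a := by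
    rw [integral_add (integrable_const a) (hZ.integrable one_le_two), hmeanZ]
    simp
  have hS : MemLp (fun ω => a + ∑ i ∈ s, w i * X i ω) 2 μ := (memLp_const a).add hZ
  have hvar := variance_eq_sub hS
  rw [variance_const_add hZ.aestronglyMeasurable, iIndepFun.variance_sum_const_mul hX hind]
    at hvar
  simp only [Pi.pow_apply, hmeanS] at hvar
  linarith

end ProbabilityTheory

open LinearRecursion

/-- Corollary 2: mean-square convergence of the joint error to 0
with time-varying update ratio u_t → 1, Σ (1 - u_t) = ∞. -/
theorem mmemq_mean_square_convergence
    {Ω : Type*} [MeasurableSpace Ω] (μ : Measure Ω) [IsProbabilityMeasure μ]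
    (N : ℕ) (u : ℕ → ℝ)
    (hu01 : ∀ t, 1 ≤ t → u t ∈ Set.Ico (0 : ℝ) 1)
    (hu1 : Tendsto u atTop (nhds 1))
    (hdiv : Tendsto (fun T => ∑ t ∈ Finset.Icc 1 T, (1 - u t)) atTop atTop)
    (lam : Fin N → ℝ)
    (c : Fin N → ℝ)
    (e : Fin N → ℕ → Ω → ℝ)
    (η : Fin N → ℕ → Ω → ℝ)
    (he0 : ∀ i ω, e i 0 ω = c i)
    (hηint : ∀ i t, MemLp (η i t) 2 μ)
    (hindep : iIndepFun (fun p : Fin N × ℕ => η p.1 p.2) μ)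
    (hmean : ∀ i t, ∫ ω, η i t ω ∂μ = 0)
    (hvar : ∀ i t, variance (η i t) μ ≤ (lam i) ^ 2)
    (hrec : ∀ i t ω, e i (t + 1) ω
      = u (t + 1) * e i t ω + (1 - u (t + 1)) * η i (t + 1) ω) :
    Tendsto (fun t => ∫ ω, (∑ i, e i t ω) ^ 2 ∂μ) atTop (nhds 0) := by
  have hu : ∀ t, 1 ≤ t → u t ∈ Set.Icc 0 1 := fun t ht => Set.Ico_subset_Icc_self (hu01 t ht)
  have hclosed : ∀ t ω, ∑ i, e i t ω = tailProd u 0 t * ∑ i, c i +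
      ∑ p ∈ univ ×ˢ Ioc 0 t, stepWeight u p.2 t * η p.1 p.2 ω := by
    intro t ω
    rw [eq_tailProd_mul_add_sum_stepWeight u (x := fun t => ∑ i, e i t ω)
      (y := fun t => ∑ i, η i t ω) (fun t => by simp only [hrec, sum_add_distrib, mul_sum])
      (Nat.zero_le t)]
    simp only [he0, sum_product, mul_sum]
    rw [sum_comm]
  have hbound : ∀ t, ∫ ω, (∑ i, e i t ω) ^ 2 ∂μ ≤ (tailProd u 0 t * ∑ i, c i) ^ 2 +
      (∑ i, lam i ^ 2) * ∑ s ∈ Ioc 0 t, stepWeight u s t ^ 2 := by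
    intro t
    simp_rw [hclosed]
    rw [integral_sq_const_add_sum_mul (X := fun p : Fin N × ℕ => η p.1 p.2)
      (fun p => hηint p.1 p.2) hindep (fun p => hmean p.1 p.2),
      sum_mul_sum, sum_product]
    gcongr (_ + ∑ i, ∑ s ∈ _, ?_) with i _ s _
    rw [mul_comm (lam i ^ 2)]
    exact mul_le_mul_of_nonneg_left (hvar i s) (sq_nonneg _)
  refine squeeze_zero (fun t => integral_nonneg fun ω => sq_nonneg _) hbound ?_
  simpa using (((tendsto_tailProd_zero u (fun t ht => (hu t ht).1) hdiv 0).mul_const _).pow 2).add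
    ((tendsto_sum_sq_stepWeight_zero hu hu1 hdiv).const_mul _)
end

section
/- Fix u ∈ (0,1) and N agents, and for each agent i an integer K_i ≥ 1. For each i and each n ∈ {1,…,K_i} let ε^{(n)}_{i,t} (t ≥ 1) be real sequences with |ε^{(n)}_{i,t}| ≤ θ^{(n)}_i for all t, where θ^{(n)}_i ≥ 0. Let Δ_{i,0} = 0 and Δ_{i,t} = u·Δ_{i,t−1} + (1−u)·Σ_{n=1}^{K_i} ε^{(n)}_{i,t} for t ≥ 1. Let Θ = Σ_{i=1}^N Σ_{n=1}^{K_i} θ^{(n)}_i > 0 and let 0 < β < Θ. Then for every natural number t with t ≤ log(1 − β/Θ)/log(u), one has |Σ_{i=1}^N Δ_{i,t}| ≤ β. -/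
/-! The joint increment `∑ i, Δ i` is itself an exponential smoothing, started at `0`, of the
summed updates `∑ i, ∑ n, ε i n`, which are bounded by `Θ`. A smoothing with weight `u` of inputs
bounded by `M` has moved at most `(1 - u ^ t) * M` after `t` steps, and the choice of `t` makes
`1 - u ^ t ≤ β / Θ`. -/

open Finset

theorem abs_le_one_sub_pow_mul_of_smoothing {u M : ℝ} (hu₀ : 0 ≤ u) (hu₁ : u ≤ 1)
    {x e : ℕ → ℝ} (hx₀ : x 0 = 0) (hx : ∀ t, x (t + 1) = u * x t + (1 - u) * e (t + 1))
    (he : ∀ t, 1 ≤ t → |e t| ≤ M) (t : ℕ) : |x t| ≤ (1 - u ^ t) * M := by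
  induction t with
  | zero => simp [hx₀]
  | succ t ih =>
    have hu' : 0 ≤ 1 - u := sub_nonneg.mpr hu₁
    calc |x (t + 1)| ≤ |u * x t| + |(1 - u) * e (t + 1)| := hx t ▸ abs_add_le _ _
      _ = u * |x t| + (1 - u) * |e (t + 1)| := by
        rw [abs_mul, abs_mul, abs_of_nonneg hu₀, abs_of_nonneg hu']
      _ ≤ u * ((1 - u ^ t) * M) + (1 - u) * M := by
        gcongr
        exact he (t + 1) (Nat.le_add_left 1 t)
      _ = (1 - u ^ (t + 1)) * M := by ring

theorem le_pow_of_natCast_le_log_div_log {u q : ℝ} (hu₀ : 0 < u) (hu₁ : u < 1) (hq : 0 < q)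
    {t : ℕ} (ht : (t : ℝ) ≤ Real.log q / Real.log u) : q ≤ u ^ t := by
  have hlog : Real.log q ≤ Real.log (u ^ t) := by
    rw [Real.log_pow]
    exact (le_div_iff_of_neg (Real.log_neg hu₀ hu₁)).mp ht
  exact (Real.log_le_log_iff hq (pow_pos hu₀ t)).mp hlog

theorem mmemq_stopping_condition_general
    (N : ℕ) (u : ℝ) (hu : u ∈ Set.Ioo (0 : ℝ) 1)
    (K : Fin N → ℕ)
    (ε : (i : Fin N) → Fin (K i) → ℕ → ℝ)
    (θ : (i : Fin N) → Fin (K i) → ℝ)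
    (hε : ∀ i n t, 1 ≤ t → |ε i n t| ≤ θ i n)
    (Δ : Fin N → ℕ → ℝ)
    (hΔ0 : ∀ i, Δ i 0 = 0)
    (hrec : ∀ i t, Δ i (t + 1) = u * Δ i t + (1 - u) * ∑ n, ε i n (t + 1))
    (Θ : ℝ) (hΘdef : Θ = ∑ i, ∑ n, θ i n) (hΘpos : 0 < Θ)
    (β : ℝ) (hβΘ : β < Θ)
    (t : ℕ) (ht : (t : ℝ) ≤ Real.log (1 - β / Θ) / Real.log u) :
    |∑ i, Δ i t| ≤ β := by
  obtain ⟨hu₀, hu₁⟩ := hu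
  have hjoint : |∑ i, Δ i t| ≤ (1 - u ^ t) * Θ := by
    refine abs_le_one_sub_pow_mul_of_smoothing hu₀.le hu₁.le (x := fun s ↦ ∑ i, Δ i s)
      (e := fun s ↦ ∑ i, ∑ n, ε i n s) (by simp [hΔ0])
      (fun s ↦ by simp only [hrec, sum_add_distrib, ← mul_sum]) (fun s hs ↦ ?_) t
    rw [hΘdef]
    calc |∑ i, ∑ n, ε i n s| ≤ ∑ i, ∑ n, |ε i n s| :=
          (abs_sum_le_sum_abs _ _).trans (sum_le_sum fun i _ ↦ abs_sum_le_sum_abs _ _)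
      _ ≤ ∑ i, ∑ n, θ i n := sum_le_sum fun i _ ↦ sum_le_sum fun n _ ↦ hε i n s hs
  have hq : 0 < 1 - β / Θ := sub_pos.mpr ((div_lt_one hΘpos).mpr hβΘ)
  have hpow : 1 - β / Θ ≤ u ^ t := le_pow_of_natCast_le_log_div_log hu₀ hu₁ hq ht
  calc |∑ i, Δ i t| ≤ (1 - u ^ t) * Θ := hjoint
    _ ≤ β / Θ * Θ := by gcongr; linarith
    _ = β := div_mul_cancel₀ β hΘpos.ne'

/-- Corollary 3: any t ≤ log(1 - β/Θ)/log(u) guarantees |Δ̄_t| ≤ β. -/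
theorem mmemq_stopping_condition
    (N : ℕ) (u : ℝ) (hu : u ∈ Set.Ioo (0 : ℝ) 1)
    (K : Fin N → ℕ) (hK : ∀ i, 1 ≤ K i)
    (ε : (i : Fin N) → Fin (K i) → ℕ → ℝ)
    (θ : (i : Fin N) → Fin (K i) → ℝ)
    (hθ : ∀ i n, 0 ≤ θ i n)
    (hε : ∀ i n t, 1 ≤ t → |ε i n t| ≤ θ i n)
    (Δ : Fin N → ℕ → ℝ)
    (hΔ0 : ∀ i, Δ i 0 = 0)
    (hrec : ∀ i t, Δ i (t + 1) = u * Δ i t + (1 - u) * ∑ n, ε i n (t + 1))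
    (Θ : ℝ) (hΘdef : Θ = ∑ i, ∑ n, θ i n) (hΘpos : 0 < Θ)
    (β : ℝ) (hβ : 0 < β) (hβΘ : β < Θ)
    (t : ℕ) (ht : (t : ℝ) ≤ Real.log (1 - β / Θ) / Real.log u) :
    |∑ i, Δ i t| ≤ β :=
  mmemq_stopping_condition_general N u hu K ε θ hε Δ hΔ0 hrec Θ hΘdef hΘpos β hβΘ t ht
end

section
/- Let σ_u > σ_c > 0 and p ∈ (0,1) with p·σ_u > (1−p)·σ_c. Let Q(z) = (1/√(2π))·∫_z^∞ exp(−t²/2) dt denote the standard normal tail function, and define g : (0,∞) → ℝ by g(x) = p·Q(x/σ_c) + (1−p)·(1 − Q(x/σ_u)). Let Δ_I = sqrt( 2·ln(p·σ_u/((1−p)·σ_c)) · (1/σ_c² − 1/σ_u²)^{−1} ). Then Δ_I ∈ (0,∞) and Δ_I is the unique global minimizer of g on (0,∞): for every x ∈ (0,∞) with x ≠ Δ_I, g(Δ_I) < g(x). -/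
/-- The standard normal (Gaussian) tail function Q(z) = (1/√(2π))·∫_z^∞ e^{-t²/2} dt. -/
noncomputable def gaussQ (z : ℝ) : ℝ :=
  (1 / Real.sqrt (2 * Real.pi)) * ∫ t in Set.Ioi z, Real.exp (-t ^ 2 / 2)

/-!
With `φ(t) = exp(-t²/2)`, the derivative of `g` is
`((1-p)·φ(x/σu)/σu - p·φ(x/σc)/σc)/√(2π)`. Taking logarithms, it is negative exactly when
`x²·(1/σc² - 1/σu²) < 2·log(p·σu/((1-p)·σc))`, i.e. when `x < Δ_I`, and positive exactly
when `x > Δ_I`; so `g` strictly decreases on `[0, Δ_I]` and strictly increases on `[Δ_I, ∞)`.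
-/

open Real MeasureTheory Set

lemma integrable_exp_neg_sq_div_two : Integrable fun t : ℝ => exp (-t ^ 2 / 2) := by
  convert integrable_exp_neg_mul_sq (b := 1 / 2) (by norm_num) using 3
  ring

lemma hasDerivAt_gaussQ (z : ℝ) : HasDerivAt gaussQ (-(exp (-z ^ 2 / 2) / √(2 * π))) z := by
  have hf := integrable_exp_neg_sq_div_two
  have hQ : gaussQ = fun w => 1 / √(2 * π) *
      ((∫ t in Ioi 0, exp (-t ^ 2 / 2)) - ∫ t in (0 : ℝ)..w, exp (-t ^ 2 / 2)) := by
    funext w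
    rw [gaussQ, ← intervalIntegral.integral_Ioi_sub_Ioi' hf.integrableOn hf.integrableOn,
      sub_sub_cancel]
  have hint := ((by fun_prop : Continuous fun t : ℝ => exp (-t ^ 2 / 2)).integral_hasStrictDerivAt
    0 z).hasDerivAt
  rw [hQ]
  exact ((hint.const_sub _).const_mul (1 / √(2 * π))).congr_deriv (by ring)

lemma mul_exp_lt_mul_exp_iff {a b u v : ℝ} (ha : 0 < a) (hb : 0 < b) :
    a * exp u < b * exp v ↔ u - v < log b - log a := by
  rw [← exp_log ha, ← exp_log hb, ← exp_add, ← exp_add, exp_lt_exp, log_exp, log_exp]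
  constructor <;> intro <;> linarith

lemma log_div_sub_log_div {a b c d : ℝ} (ha : a ≠ 0) (hb : b ≠ 0) (hc : c ≠ 0)
    (hd : d ≠ 0) : log (a / b) - log (c / d) = log (a * d / (c * b)) := by
  rw [← log_div (div_ne_zero ha hb) (div_ne_zero hc hd)]
  congr 1
  field_simp

lemma one_div_sq_sub_one_div_sq_pos {a b : ℝ} (ha : 0 < a) (hab : a < b) :
    0 < 1 / a ^ 2 - 1 / b ^ 2 :=
  sub_pos.2 (one_div_lt_one_div_of_lt (by positivity) (by gcongr))

lemma lt_of_hasDerivAt_neg_of_pos {f f' : ℝ → ℝ} {a m x : ℝ}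
    (hf : ∀ y, HasDerivAt f (f' y) y) (hneg : ∀ y ∈ Ioo a m, f' y < 0)
    (hpos : ∀ y ∈ Ioi m, 0 < f' y) (hax : a ≤ x) (hxm : x ≠ m) : f m < f x := by
  have hcont : Continuous f := Differentiable.continuous fun y => (hf y).differentiableAt
  rcases hxm.lt_or_gt with hlt | hgt
  · have hanti : StrictAntiOn f (Icc a m) :=
      strictAntiOn_of_hasDerivWithinAt_neg (convex_Icc a m) hcont.continuousOn
        (fun y _ => (hf y).hasDerivWithinAt) (by simpa only [interior_Icc] using hneg)
    exact hanti ⟨hax, hlt.le⟩ ⟨hax.trans hlt.le, le_rfl⟩ hlt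
  · have hmono : StrictMonoOn f (Ici m) :=
      strictMonoOn_of_hasDerivWithinAt_pos (convex_Ici m) hcont.continuousOn
        (fun y _ => (hf y).hasDerivWithinAt) (by simpa only [interior_Ici] using hpos)
    exact hmono self_mem_Ici hgt.le hgt

noncomputable def misdetectionBound (p σc σu x : ℝ) : ℝ :=
  p * gaussQ (x / σc) + (1 - p) * (1 - gaussQ (x / σu))

noncomputable def densityGap (p σc σu x : ℝ) : ℝ :=
  (1 - p) / σu * exp (-(x / σu) ^ 2 / 2) - p / σc * exp (-(x / σc) ^ 2 / 2)

noncomputable def deltaI (p σc σu : ℝ) : ℝ :=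
  √(2 * log (p * σu / ((1 - p) * σc)) * (1 / σc ^ 2 - 1 / σu ^ 2)⁻¹)

section Threshold

variable {p σc σu : ℝ}

lemma hasDerivAt_misdetectionBound (x : ℝ) :
    HasDerivAt (misdetectionBound p σc σu) (densityGap p σc σu x / √(2 * π)) x := by
  have hc := (hasDerivAt_gaussQ (x / σc)).comp x ((hasDerivAt_id x).div_const σc)
  have hu := (hasDerivAt_gaussQ (x / σu)).comp x ((hasDerivAt_id x).div_const σu)
  exact ((hc.const_mul p).add ((hu.const_sub 1).const_mul (1 - p))).congr_deriv
    (by simp only [densityGap]; ring)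

lemma densityGap_neg_iff (hp : p ∈ Ioo 0 1) (hσc : 0 < σc) (hσu : 0 < σu) (x : ℝ) :
    densityGap p σc σu x < 0 ↔
      x ^ 2 * (1 / σc ^ 2 - 1 / σu ^ 2) < 2 * log (p * σu / ((1 - p) * σc)) := by
  have hq : 0 < 1 - p := sub_pos.2 hp.2
  rw [densityGap, sub_neg, mul_exp_lt_mul_exp_iff (div_pos hq hσu) (div_pos hp.1 hσc),
    log_div_sub_log_div hp.1.ne' hσc.ne' hq.ne' hσu.ne']
  have hsq : -(x / σu) ^ 2 / 2 - -(x / σc) ^ 2 / 2 = x ^ 2 * (1 / σc ^ 2 - 1 / σu ^ 2) / 2 := by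
    ring
  constructor <;> intro <;> linarith

lemma densityGap_pos_iff (hp : p ∈ Ioo 0 1) (hσc : 0 < σc) (hσu : 0 < σu) (x : ℝ) :
    0 < densityGap p σc σu x ↔
      2 * log (p * σu / ((1 - p) * σc)) < x ^ 2 * (1 / σc ^ 2 - 1 / σu ^ 2) := by
  have hq : 0 < 1 - p := sub_pos.2 hp.2
  rw [densityGap, sub_pos, mul_exp_lt_mul_exp_iff (div_pos hp.1 hσc) (div_pos hq hσu),
    ← log_div_sub_log_div hp.1.ne' hσc.ne' hq.ne' hσu.ne']
  have hsq : -(x / σu) ^ 2 / 2 - -(x / σc) ^ 2 / 2 = x ^ 2 * (1 / σc ^ 2 - 1 / σu ^ 2) / 2 := by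
    ring
  constructor <;> intro <;> linarith

lemma lt_deltaI_iff {x : ℝ} (hσc : 0 < σc) (hσcu : σc < σu) (hx : 0 ≤ x) :
    x < deltaI p σc σu ↔
      x ^ 2 * (1 / σc ^ 2 - 1 / σu ^ 2) < 2 * log (p * σu / ((1 - p) * σc)) := by
  rw [deltaI, lt_sqrt hx, lt_mul_inv_iff₀ (one_div_sq_sub_one_div_sq_pos hσc hσcu)]

lemma deltaI_lt_iff {x : ℝ} (hσc : 0 < σc) (hσcu : σc < σu) (hx : 0 < x) :
    deltaI p σc σu < x ↔
      2 * log (p * σu / ((1 - p) * σc)) < x ^ 2 * (1 / σc ^ 2 - 1 / σu ^ 2) := by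
  rw [deltaI, sqrt_lt' hx, mul_inv_lt_iff₀ (one_div_sq_sub_one_div_sq_pos hσc hσcu)]

lemma deltaI_pos (hp : p ∈ Ioo 0 1) (hσc : 0 < σc) (hσcu : σc < σu)
    (h : (1 - p) * σc < p * σu) : 0 < deltaI p σc σu := by
  have hq : 0 < 1 - p := sub_pos.2 hp.2
  have hL : 0 < log (p * σu / ((1 - p) * σc)) := log_pos ((one_lt_div (by positivity)).2 h)
  have hk := one_div_sq_sub_one_div_sq_pos hσc hσcu
  exact sqrt_pos.2 (by positivity)

end Threshold

/-- Δ_I uniquely minimizes the misdetection lower bound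
g(x) = p·Q(x/σ_c) + (1-p)·(1 - Q(x/σ_u)) on (0,∞). -/
theorem deltaI_unique_minimizer
    (σc σu p ΔI : ℝ)
    (hσc : 0 < σc) (hσcu : σc < σu)
    (hp : p ∈ Set.Ioo (0 : ℝ) 1)
    (h : (1 - p) * σc < p * σu)
    (hΔI : ΔI = Real.sqrt (2 * Real.log (p * σu / ((1 - p) * σc))
      * (1 / σc ^ 2 - 1 / σu ^ 2)⁻¹)) :
    0 < ΔI ∧
      ∀ x : ℝ, 0 < x → x ≠ ΔI →
        p * gaussQ (ΔI / σc) + (1 - p) * (1 - gaussQ (ΔI / σu))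
          < p * gaussQ (x / σc) + (1 - p) * (1 - gaussQ (x / σu)) := by
  have hσu : 0 < σu := hσc.trans hσcu
  rw [show ΔI = deltaI p σc σu from hΔI]
  refine ⟨deltaI_pos hp hσc hσcu h, fun x hx hxΔ => ?_⟩
  refine lt_of_hasDerivAt_neg_of_pos (f := misdetectionBound p σc σu)
    hasDerivAt_misdetectionBound (fun y hy => ?_) (fun y hy => ?_) hx.le hxΔ
  · refine div_neg_of_neg_of_pos ?_ (by positivity)
    exact (densityGap_neg_iff hp hσc hσu y).2 ((lt_deltaI_iff hσc hσcu hy.1.le).1 hy.2)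
  · have hy0 : 0 < y := (sqrt_nonneg _).trans_lt hy
    refine div_pos ?_ (by positivity)
    exact (densityGap_pos_iff hp hσc hσu y).2 ((deltaI_lt_iff hσc hσcu hy0).1 hy)
end
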